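/- Let g ∈ W(D_n) have a signed permutation cycle β_1 = c_{j_1}···c_{j_{2h}}·(1 2 ... w) supported on {1,...,w} with an even number 2h of minus signs, j_1 < j_2 < ... < j_{2h}. Then in the module of 1-cochains on ⟨g⟩ with values in Pic = Z^{n+2} (action via Φ), the identity (1/2)·Σ_{i=1}^{w} f_{i,g} = Σ_{u=1}^{h} Σ_{r=j_{2u−1}+1}^{j_{2u}} f_{r,g} holds, where f_{i,g} = (Φ(g) − I)e_i; in particular (1/2)Σ_{i=1}^{w} f_{i,g} lies in the Z-span of f_{1,g},...,f_{w,g}. -/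

import Mathlib

/-- The conic-bundle matrix `Φ(g)` on `Pic = ℤ^{n+2}` for a signed permutation given by
its sign data `ε` (so `g = ∏_{ε i} c_i · τ`, with `s(i) = -1` iff `ε i`) and underlying
permutation `τ`, on indices `Fin 2 ⊕ Fin n` (`inl 0 = l₋₁`, `inl 1 = l₀`, `inr i = l_i`). -/
def PhiD {n : ℕ} (ε : Fin n → Bool) (τ : Equiv.Perm (Fin n)) :
    Matrix (Fin 2 ⊕ Fin n) (Fin 2 ⊕ Fin n) ℤ :=
  Matrix.of fun r c =>
    match r, c with
    | Sum.inl r', Sum.inl c' =>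
        if r' = 0 then (if c' = 0 then 1 else 0)
        else if c' = 0 then
          (((Finset.univ.filter fun i : Fin n => ε i = true).card / 2 : ℕ) : ℤ)
        else 1
    | Sum.inl r', Sum.inr i =>
        if r' = 0 then 0 else if ε (τ.symm i) = true then 1 else 0
    | Sum.inr i, Sum.inl c' =>
        if c' = 0 then (if ε i = true then -1 else 0) else 0
    | Sum.inr i, Sum.inr jj =>
        if jj = τ i then (if ε i = true then -1 else 1) else 0

/-- The column `f_{i,g} = (Φ(g) - I)·e_i` of the conic-bundle matrix. -/
def fcol {n : ℕ} (ε : Fin n → Bool) (τ : Equiv.Perm (Fin n)) (i : Fin n) :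
    (Fin 2 ⊕ Fin n) → ℤ :=
  fun r => (PhiD ε τ - 1) r (Sum.inr i)

lemma fcol_inl0 {n : ℕ} (ε : Fin n → Bool) (τ : Equiv.Perm (Fin n)) (i : Fin n)
    (r' : Fin 2) (hr : (r' : ℕ) = 0) : fcol ε τ i (Sum.inl r') = 0 := by
  have hr0 : r' = 0 := Fin.ext (by simpa using hr)
  subst hr0
  show PhiD ε τ (Sum.inl 0) (Sum.inr i) - (1 : Matrix (Fin 2 ⊕ Fin n) (Fin 2 ⊕ Fin n) ℤ) (Sum.inl 0) (Sum.inr i) = _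
  rw [Matrix.one_apply]
  simp [PhiD]

lemma fcol_inl1 {n : ℕ} (ε : Fin n → Bool) (τ : Equiv.Perm (Fin n)) (i : Fin n)
    (r' : Fin 2) (hr : (r' : ℕ) = 1) :
    fcol ε τ i (Sum.inl r') = if ε (τ.symm i) = true then 1 else 0 := by
  have hr1 : r' = 1 := Fin.ext (by simpa using hr)
  subst hr1
  show PhiD ε τ (Sum.inl 1) (Sum.inr i) - (1 : Matrix _ _ ℤ) (Sum.inl 1) (Sum.inr i) = _
  rw [Matrix.one_apply]
  simp [PhiD]

lemma fcol_inr {n : ℕ} (ε : Fin n → Bool) (τ : Equiv.Perm (Fin n)) (i i0 : Fin n) :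
    fcol ε τ i (Sum.inr i0) =
      (if i = τ i0 then (if ε i0 = true then -1 else 1) else 0)
        - (if i0 = i then 1 else 0) := by
  show PhiD ε τ (Sum.inr i0) (Sum.inr i) - (1 : Matrix _ _ ℤ) (Sum.inr i0) (Sum.inr i) = _
  rw [Matrix.one_apply]
  simp only [PhiD, Matrix.of_apply, Sum.inr.injEq]


/-- For `g ∈ W(D_n)` containing the signed cycle `β₁ = c_{j_1}⋯c_{j_{2h}}·(1 2 … w)` with
an even number `2h` of minus signs (`j`'s increasing, supported in the cycle), one has
`(1/2)·Σ_{i=1}^w f_{i,g} = Σ_{u=1}^h Σ_{r=j_{2u-1}+1}^{j_{2u}} f_{r,g}`; in particular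
`(1/2)Σ_{i=1}^w f_{i,g}` lies in the `ℤ`-span of `f_{1,g},…,f_{w,g}`. -/
theorem stmt11 {n w h : ℕ} (hw : w ≤ n) (j : ℕ → Fin n)
    (hjlt : ∀ u, u < 2 * h → ((j u : ℕ) < w))
    (hjmono : StrictMonoOn j (Set.Iio (2 * h)))
    (ε : Fin n → Bool)
    (hε : ∀ i : Fin n, (i : ℕ) < w → (ε i = true ↔ ∃ u < 2 * h, j u = i))
    (hD : Even ((Finset.univ.filter fun i : Fin n => ε i = true).card))
    (τ : Equiv.Perm (Fin n))
    (hτ : ∀ i : Fin n, (i : ℕ) < w → ((τ i : ℕ) = ((i : ℕ) + 1) % w)) :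
    (∑ i ∈ Finset.univ.filter (fun i : Fin n => (i : ℕ) < w), fcol ε τ i) =
        2 • (∑ u ∈ Finset.range h,
          ∑ r ∈ Finset.Ioc (j (2 * u)) (j (2 * u + 1)), fcol ε τ r) ∧
      ∃ α : Fin n → ℤ, (∀ i : Fin n, ¬ ((i : ℕ) < w) → α i = 0) ∧
        (∑ i ∈ Finset.univ.filter (fun i : Fin n => (i : ℕ) < w), fcol ε τ i) =
          2 • (∑ i : Fin n, α i • fcol ε τ i) := by
  classical
  rcases Nat.eq_zero_or_pos w with hw0 | hwpos
  · subst hw0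
    have hh : h = 0 := by
      by_contra hh
      exact absurd (hjlt 0 (by omega)) (by omega)
    subst hh
    constructor
    · simp
    · exact ⟨0, fun i _ => rfl, by simp⟩
  -- basic facts
  have hinj : Set.InjOn j (Set.Iio (2 * h)) := hjmono.injOn
  have hjle : ∀ a b : ℕ, a ≤ b → b < 2 * h → j a ≤ j b := by
    intro a b hab hb
    rcases eq_or_lt_of_le hab with rfl | hab'
    · exact le_refl _
    · exact le_of_lt (hjmono (Set.mem_Iio.mpr (by omega)) (Set.mem_Iio.mpr hb) hab')
  have hτlt : ∀ i : Fin n, (i : ℕ) < w → (τ i : ℕ) < w := by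
    intro i hi
    rw [hτ i hi]
    exact Nat.mod_lt _ hwpos
  have hτlt' : ∀ i : Fin n, (τ i : ℕ) < w → (i : ℕ) < w := by
    intro i hi
    by_contra hi'
    set S : Finset (Fin n) := Finset.univ.filter (fun a : Fin n => (a : ℕ) < w) with hS
    have hsub : S.image τ ⊆ S := by
      intro a ha
      obtain ⟨b, hb, rfl⟩ := Finset.mem_image.mp ha
      simp only [hS, Finset.mem_filter, Finset.mem_univ, true_and] at hb ⊢
      exact hτlt b hb
    have heq : S.image τ = S :=
      Finset.eq_of_subset_of_card_le hsub
        (le_of_eq (Finset.card_image_of_injective _ τ.injective).symm)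
    have hmem : τ i ∈ S := by simp [hS, hi]
    rw [← heq] at hmem
    obtain ⟨a, ha, hae⟩ := Finset.mem_image.mp hmem
    have : a = i := τ.injective hae
    subst this
    simp only [hS, Finset.mem_filter, Finset.mem_univ, true_and] at ha
    exact hi' ha
  -- counting function N
  set N : Fin n → ℕ := fun x => ((Finset.range (2 * h)).filter (fun v => j v < x)).card
    with hNdef
  have hNiff : ∀ v, v < 2 * h → ∀ x : Fin n, (j v < x ↔ v < N x) := by
    intro v hv x
    constructor
    · intro hjv
      have hsub : Finset.range (v + 1) ⊆ (Finset.range (2 * h)).filter (fun v => j v < x) := by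
        intro v' hv'
        rw [Finset.mem_range] at hv'
        refine Finset.mem_filter.mpr ⟨Finset.mem_range.mpr (by omega), ?_⟩
        exact lt_of_le_of_lt (hjle v' v (by omega) hv) hjv
      have hcard := Finset.card_le_card hsub
      rw [Finset.card_range] at hcard
      simp only [hNdef]
      omega
    · intro hvN
      simp only [hNdef] at hvN
      by_contra hjv
      push_neg at hjv
      have hsub : (Finset.range (2 * h)).filter (fun v => j v < x) ⊆ Finset.range v := by
        intro v' hv'
        rw [Finset.mem_filter, Finset.mem_range] at hv'
        rw [Finset.mem_range]
        by_contra hvv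
        push_neg at hvv
        exact absurd (lt_of_le_of_lt (hjv.trans (hjle v v' hvv hv'.1)) hv'.2) (lt_irrefl _)
      have hcard := Finset.card_le_card hsub
      rw [Finset.card_range] at hcard
      omega
  have hNle : ∀ x : Fin n, N x ≤ 2 * h := by
    intro x
    have hcard := Finset.card_filter_le (Finset.range (2 * h)) (fun v => j v < x)
    rw [Finset.card_range] at hcard
    exact hcard
  have hIocN : ∀ u, u < h → ∀ x : Fin n,
      (x ∈ Finset.Ioc (j (2 * u)) (j (2 * u + 1)) ↔ N x = 2 * u + 1) := by
    intro u hu x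
    rw [Finset.mem_Ioc]
    have h1 := hNiff (2 * u) (by omega) x
    have h2 := hNiff (2 * u + 1) (by omega) x
    constructor
    · rintro ⟨ha, hb⟩
      have ha' := h1.mp ha
      have hb' : ¬ (2 * u + 1 < N x) := fun hc => absurd (h2.mpr hc) (not_lt.mpr hb)
      omega
    · intro hNx
      refine ⟨h1.mpr (by omega), ?_⟩
      by_contra hb
      push_neg at hb
      have := h2.mp hb
      omega
  have hIocw : ∀ u, u < h → ∀ x : Fin n,
      x ∈ Finset.Ioc (j (2 * u)) (j (2 * u + 1)) → (x : ℕ) < w := by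
    intro u hu x hx
    have := (Finset.mem_Ioc.mp hx).2
    exact lt_of_le_of_lt this (hjlt (2 * u + 1) (by omega))
  have hcardeq : ∀ x : Fin n, (x : ℕ) < w →
      ((Finset.range (2 * h)).filter (fun v => j v = x)).card
        = (if ε x = true then 1 else 0) := by
    intro x hxw
    by_cases hεx : ε x = true
    · obtain ⟨v₀, hv₀, hjv₀⟩ := (hε x hxw).mp hεx
      rw [if_pos hεx]
      have : (Finset.range (2 * h)).filter (fun v => j v = x) = {v₀} := by
        ext v
        simp only [Finset.mem_filter, Finset.mem_range, Finset.mem_singleton]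
        constructor
        · rintro ⟨hv, hjv⟩
          exact hinj (Set.mem_Iio.mpr hv) (Set.mem_Iio.mpr hv₀) (by rw [hjv, hjv₀])
        · rintro rfl
          exact ⟨hv₀, hjv₀⟩
      rw [this, Finset.card_singleton]
    · rw [if_neg hεx, Finset.card_eq_zero]
      refine Finset.filter_eq_empty_iff.mpr ?_
      intro v hv hjv
      exact hεx ((hε x hxw).mpr ⟨v, Finset.mem_range.mp hv, hjv⟩)
  have hdisj : ∀ x : Fin n,
      Disjoint ((Finset.range (2 * h)).filter (fun v => j v < x))
        ((Finset.range (2 * h)).filter (fun v => j v = x)) := by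
    intro x
    rw [Finset.disjoint_left]
    intro a ha hb
    rw [Finset.mem_filter] at ha hb
    exact absurd (hb.2 ▸ ha.2) (lt_irrefl _)
  have hNτ : ∀ x : Fin n, (x : ℕ) < w →
      N (τ x) % 2 = (N x + (if ε x = true then 1 else 0)) % 2 := by
    intro x hxw
    by_cases hwrap : (x : ℕ) + 1 < w
    · have hτx : (τ x : ℕ) = (x : ℕ) + 1 := by
        rw [hτ x hxw, Nat.mod_eq_of_lt hwrap]
      have hunion : (Finset.range (2 * h)).filter (fun v => j v < τ x)
          = (Finset.range (2 * h)).filter (fun v => j v < x)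
            ∪ (Finset.range (2 * h)).filter (fun v => j v = x) := by
        rw [← Finset.filter_or]
        apply Finset.filter_congr
        intro v _
        rw [Fin.lt_def, Fin.lt_def, hτx, Fin.ext_iff]
        omega
      have hNval : N (τ x) = N x + (if ε x = true then 1 else 0) := by
        simp only [hNdef]
        rw [hunion, Finset.card_union_of_disjoint (hdisj x), hcardeq x hxw]
      omega
    · have hxw1 : (x : ℕ) + 1 = w := by omega
      have hτx : (τ x : ℕ) = 0 := by
        rw [hτ x hxw, hxw1, Nat.mod_self]
      have h0 : N (τ x) = 0 := by
        simp only [hNdef]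
        rw [Finset.card_eq_zero]
        refine Finset.filter_eq_empty_iff.mpr ?_
        intro v _ hlt
        rw [Fin.lt_def, hτx] at hlt
        omega
      have hNval : N x + (if ε x = true then 1 else 0) = 2 * h := by
        have hfull : (Finset.range (2 * h)).filter (fun v => j v < x)
            ∪ (Finset.range (2 * h)).filter (fun v => j v = x) = Finset.range (2 * h) := by
          rw [← Finset.filter_or]
          apply Finset.filter_true_of_mem
          intro v hv
          have := hjlt v (Finset.mem_range.mp hv)
          rw [Fin.lt_def, Fin.ext_iff]
          omega
        have hc := Finset.card_union_of_disjoint (hdisj x)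
        rw [hfull, Finset.card_range, hcardeq x hxw] at hc
        simp only [hNdef]
        omega
      omega
  have hC : ∀ x : Fin n,
      (∑ u ∈ Finset.range h, if x ∈ Finset.Ioc (j (2 * u)) (j (2 * u + 1)) then (1 : ℤ) else 0)
        = if N x % 2 = 1 then 1 else 0 := by
    intro x
    by_cases hodd : N x % 2 = 1
    · obtain ⟨u₀, hu₀⟩ : ∃ u₀, N x = 2 * u₀ + 1 := ⟨N x / 2, by omega⟩
      have hu₀h : u₀ < h := by have := hNle x; omega
      rw [if_pos hodd, Finset.sum_eq_single u₀]
      · rw [if_pos ((hIocN u₀ hu₀h x).mpr hu₀)]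
      · intro u hu hne
        rw [if_neg]
        intro hmem
        have := (hIocN u (Finset.mem_range.mp hu) x).mp hmem
        omega
      · intro hu
        exact absurd (Finset.mem_range.mpr hu₀h) hu
    · rw [if_neg hodd]
      apply Finset.sum_eq_zero
      intro u hu
      rw [if_neg]
      intro hmem
      have := (hIocN u (Finset.mem_range.mp hu) x).mp hmem
      omega
  -- main equality
  have Emain : (∑ i ∈ Finset.univ.filter (fun i : Fin n => (i : ℕ) < w), fcol ε τ i)
      = 2 • (∑ u ∈ Finset.range h,
          ∑ r ∈ Finset.Ioc (j (2 * u)) (j (2 * u + 1)), fcol ε τ r) := by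
    funext r
    simp only [Finset.sum_apply, Pi.smul_apply, nsmul_eq_mul, Nat.cast_ofNat]
    rcases r with r' | i0
    · by_cases hr' : (r' : ℕ) = 0
      · simp only [fun i => fcol_inl0 ε τ i r' hr', Finset.sum_const_zero, mul_zero]
      · have hr1 : (r' : ℕ) = 1 := by have := r'.isLt; omega
        simp only [fun i => fcol_inl1 ε τ i r' hr1]
        have hre : (∑ i ∈ Finset.univ.filter (fun i : Fin n => (i : ℕ) < w),
              (if ε (τ.symm i) = true then (1 : ℤ) else 0))
            = ∑ i ∈ Finset.univ.filter (fun i : Fin n => (i : ℕ) < w),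
              (if ε i = true then (1 : ℤ) else 0) := by
          refine (Finset.sum_equiv τ ?_ ?_).symm
          · intro i
            simp only [Finset.mem_filter, Finset.mem_univ, true_and]
            exact ⟨hτlt i, hτlt' i⟩
          · intro i _
            rw [Equiv.symm_apply_apply]
        have hcount : (∑ i ∈ Finset.univ.filter (fun i : Fin n => (i : ℕ) < w),
            (if ε i = true then (1 : ℤ) else 0)) = (2 * h : ℕ) := by
          rw [Finset.sum_boole]
          congr 1
          rw [Finset.filter_filter]
          have heq : Finset.univ.filter (fun i : Fin n => (i : ℕ) < w ∧ ε i = true)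
              = (Finset.range (2 * h)).image j := by
            ext x
            simp only [Finset.mem_filter, Finset.mem_univ, true_and, Finset.mem_image,
              Finset.mem_range]
            constructor
            · rintro ⟨hxw, hεx⟩
              obtain ⟨v, hv, hjv⟩ := (hε x hxw).mp hεx
              exact ⟨v, hv, hjv⟩
            · rintro ⟨v, hv, rfl⟩
              have hxw := hjlt v hv
              exact ⟨hxw, (hε _ hxw).mpr ⟨v, hv, rfl⟩⟩
          rw [heq, Finset.card_image_of_injOn (by rw [Finset.coe_range]; exact hinj),
            Finset.card_range]
        have hR1 : ∀ u, u < h →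
            (∑ r ∈ Finset.Ioc (j (2 * u)) (j (2 * u + 1)),
              (if ε (τ.symm r) = true then (1 : ℤ) else 0)) = 1 := by
          intro u hu
          have h2u : 2 * u < 2 * h := by omega
          have h2u1 : 2 * u + 1 < 2 * h := by omega
          have hjlt2u1 : (j (2 * u + 1) : ℕ) < w := hjlt _ h2u1
          have hjj : (j (2 * u) : ℕ) < (j (2 * u + 1) : ℕ) :=
            hjmono (Set.mem_Iio.mpr h2u) (Set.mem_Iio.mpr h2u1) (by omega)
          set r₀ : Fin n := ⟨(j (2 * u) : ℕ) + 1, by omega⟩ with hr₀def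
          have hr₀val : (r₀ : ℕ) = (j (2 * u) : ℕ) + 1 := rfl
          have hr₀mem : r₀ ∈ Finset.Ioc (j (2 * u)) (j (2 * u + 1)) := by
            rw [Finset.mem_Ioc, Fin.lt_def, Fin.le_def, hr₀val]
            omega
          have hval : ∀ r ∈ Finset.Ioc (j (2 * u)) (j (2 * u + 1)),
              (if ε (τ.symm r) = true then (1 : ℤ) else 0) = if r = r₀ then 1 else 0 := by
            intro r hr
            rw [Finset.mem_Ioc] at hr
            have hr1' := Fin.lt_def.mp hr.1
            have hr2 := Fin.le_def.mp hr.2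
            have hrlt : (r : ℕ) < w := lt_of_le_of_lt hr2 hjlt2u1
            have hrpos : 1 ≤ (r : ℕ) := by omega
            have hrn : (r : ℕ) - 1 < n := by omega
            set rp : Fin n := ⟨(r : ℕ) - 1, hrn⟩ with hrpdef
            have hrpval : (rp : ℕ) = (r : ℕ) - 1 := rfl
            have hτrp : τ rp = r := by
              apply Fin.ext
              rw [hτ rp (by rw [hrpval]; omega), hrpval,
                Nat.sub_add_cancel hrpos, Nat.mod_eq_of_lt hrlt]
            have hsymm : τ.symm r = rp := by rw [← hτrp, Equiv.symm_apply_apply]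
            rw [hsymm]
            by_cases hεr : ε rp = true
            · obtain ⟨v, hv, hjv⟩ := (hε rp (by rw [hrpval]; omega)).mp hεr
              have hjvval : (j v : ℕ) = (r : ℕ) - 1 := by rw [hjv]
              have hv1 : 2 * u ≤ v := by
                by_contra hc
                push_neg at hc
                have hlt := hjmono (Set.mem_Iio.mpr (by omega : v < 2 * h))
                  (Set.mem_Iio.mpr h2u) hc
                rw [Fin.lt_def] at hlt
                omega
              have hv2 : v ≤ 2 * u := by
                by_contra hc
                push_neg at hc
                have hle := hjle (2 * u + 1) v (by omega) hv
                rw [Fin.le_def] at hle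
                omega
              have hveq : v = 2 * u := le_antisymm hv2 hv1
              have hj2uval : (j (2 * u) : ℕ) = (r : ℕ) - 1 := by
                rw [← hveq]; exact hjvval
              have hreq : r = r₀ := by
                apply Fin.ext
                rw [hr₀val]
                omega
              rw [if_pos hεr, if_pos hreq]
            · rw [if_neg hεr, if_neg]
              intro hrr₀
              apply hεr
              have hrval : (r : ℕ) = (j (2 * u) : ℕ) + 1 := by
                have := congrArg Fin.val hrr₀
                rw [hr₀val] at this
                exact this
              have hrpj : rp = j (2 * u) := by
                apply Fin.ext
                rw [hrpval]
                omega
              rw [hrpj]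
              exact (hε _ (hjlt _ h2u)).mpr ⟨2 * u, h2u, rfl⟩
          rw [Finset.sum_congr rfl hval, Finset.sum_ite_eq' _ r₀ (fun _ => (1 : ℤ)),
            if_pos hr₀mem]
        rw [hre, hcount, Finset.sum_congr rfl (fun u hu => hR1 u (Finset.mem_range.mp hu)),
          Finset.sum_const, Finset.card_range]
        push_cast
        ring
    · -- inr i0 row
      simp only [fcol_inr]
      rw [Finset.sum_sub_distrib, Finset.sum_ite_eq' _ (τ i0), Finset.sum_ite_eq _ i0]
      have hRu : ∀ u, (∑ r ∈ Finset.Ioc (j (2 * u)) (j (2 * u + 1)),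
            ((if r = τ i0 then (if ε i0 = true then -1 else 1) else 0)
              - (if i0 = r then (1 : ℤ) else 0)))
          = (if ε i0 = true then (-1 : ℤ) else 1)
              * (if τ i0 ∈ Finset.Ioc (j (2 * u)) (j (2 * u + 1)) then 1 else 0)
            - (if i0 ∈ Finset.Ioc (j (2 * u)) (j (2 * u + 1)) then 1 else 0) := by
        intro u
        rw [Finset.sum_sub_distrib, Finset.sum_ite_eq' _ (τ i0), Finset.sum_ite_eq _ i0]
        congr 1
        split_ifs <;> ring
      rw [Finset.sum_congr rfl (fun u _ => hRu u), Finset.sum_sub_distrib, ← Finset.mul_sum]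
      by_cases hi0 : (i0 : ℕ) < w
      · have hτmem : τ i0 ∈ Finset.univ.filter (fun i : Fin n => (i : ℕ) < w) := by
          simp [hτlt i0 hi0]
        have hi0mem : i0 ∈ Finset.univ.filter (fun i : Fin n => (i : ℕ) < w) := by
          simp [hi0]
        rw [if_pos hτmem, if_pos hi0mem, hC (τ i0), hC i0]
        have hrel := hNτ i0 hi0
        by_cases hεi0 : ε i0 = true
        · rw [if_pos hεi0] at hrel
          rcases Nat.mod_two_eq_zero_or_one (N i0) with hp | hp
          · have hq : N (τ i0) % 2 = 1 := by omega
            simp [hεi0, hp, hq]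
          · have hq : N (τ i0) % 2 = 0 := by omega
            simp [hεi0, hp, hq]
        · rw [if_neg hεi0] at hrel
          rcases Nat.mod_two_eq_zero_or_one (N i0) with hp | hp
          · have hq : N (τ i0) % 2 = 0 := by omega
            simp [hεi0, hp, hq]
          · have hq : N (τ i0) % 2 = 1 := by omega
            simp [hεi0, hp, hq]
      · have hτn : τ i0 ∉ Finset.univ.filter (fun i : Fin n => (i : ℕ) < w) := by
          simp only [Finset.mem_filter, Finset.mem_univ, true_and]
          exact fun hc => hi0 (hτlt' i0 hc)
        have hi0n : i0 ∉ Finset.univ.filter (fun i : Fin n => (i : ℕ) < w) := by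
          simp [hi0]
        rw [if_neg hτn, if_neg hi0n]
        have hz1 : (∑ u ∈ Finset.range h,
            (if τ i0 ∈ Finset.Ioc (j (2 * u)) (j (2 * u + 1)) then (1 : ℤ) else 0)) = 0 := by
          apply Finset.sum_eq_zero
          intro u hu
          rw [if_neg]
          intro hmem
          exact hi0 (hτlt' i0 (hIocw u (Finset.mem_range.mp hu) _ hmem))
        have hz2 : (∑ u ∈ Finset.range h,
            (if i0 ∈ Finset.Ioc (j (2 * u)) (j (2 * u + 1)) then (1 : ℤ) else 0)) = 0 := by
          apply Finset.sum_eq_zero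
          intro u hu
          rw [if_neg]
          intro hmem
          exact hi0 (hIocw u (Finset.mem_range.mp hu) _ hmem)
        rw [hz1, hz2]
        ring
  refine ⟨Emain, ?_⟩
  refine ⟨fun i => ∑ u ∈ Finset.range h,
      (if i ∈ Finset.Ioc (j (2 * u)) (j (2 * u + 1)) then (1 : ℤ) else 0), ?_, ?_⟩
  · intro i hi
    apply Finset.sum_eq_zero
    intro u hu
    rw [if_neg]
    intro hmem
    exact hi (hIocw u (Finset.mem_range.mp hu) i hmem)
  · rw [Emain]
    congr 1
    symm
    calc (∑ i : Fin n, (∑ u ∈ Finset.range h,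
          (if i ∈ Finset.Ioc (j (2 * u)) (j (2 * u + 1)) then (1 : ℤ) else 0)) • fcol ε τ i)
        = ∑ i : Fin n, ∑ u ∈ Finset.range h,
            (if i ∈ Finset.Ioc (j (2 * u)) (j (2 * u + 1)) then (1 : ℤ) else 0) • fcol ε τ i := by
          refine Finset.sum_congr rfl fun i _ => ?_
          rw [Finset.sum_smul]
      _ = ∑ u ∈ Finset.range h, ∑ i : Fin n,
            (if i ∈ Finset.Ioc (j (2 * u)) (j (2 * u + 1)) then (1 : ℤ) else 0) • fcol ε τ i :=
          Finset.sum_comm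
      _ = ∑ u ∈ Finset.range h, ∑ r ∈ Finset.Ioc (j (2 * u)) (j (2 * u + 1)), fcol ε τ r := by
          refine Finset.sum_congr rfl fun u _ => ?_
          simp only [ite_smul, one_smul, zero_smul]
          rw [Finset.sum_ite_mem, Finset.univ_inter]
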